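/- Let f : [0,1] → ℝ be absolutely continuous with square-integrable derivative, and g a step function constant on each interval (t_{j-1}, t_j] with t_j = j/p. Then for any ε > 0, Δ = f - g satisfies ‖Δ‖²_p ≤ (1+ε)‖Δ‖² + (1+ε⁻¹)‖f'‖²/p². -/

import Mathlib

/-!
Fix a cell `[a, b] = [(j-1)/p, j/p]`, on which `g` equals a constant `c` (except at `a`). For
`t ∈ [a, b]` write `f b - c = (f t - c) + (f b - f t)`. Young's inequality with weight `ε`
bounds `(f b - c)²` by `(1 + ε) (f t - c)² + (1 + ε⁻¹) (f b - f t)²`, and by the fundamental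
theorem of calculus and Cauchy–Schwarz `(f b - f t)² ≤ (b - a) ∫ₐᵇ f'²`. Averaging over
`t ∈ [a, b]` and summing over the `p` cells gives the inequality.
-/

open MeasureTheory intervalIntegral Set
open scoped Interval

theorem add_sq_le_one_add_mul_sq_add {ε : ℝ} (hε : 0 < ε) (x y : ℝ) :
    (x + y) ^ 2 ≤ (1 + ε) * x ^ 2 + (1 + ε⁻¹) * y ^ 2 := by
  have key : 0 ≤ ε⁻¹ * (ε * x - y) ^ 2 := by positivity
  have hinv : ε⁻¹ * ε = 1 := inv_mul_cancel₀ hε.ne'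
  nlinarith

theorem sq_intervalIntegral_le {u : ℝ → ℝ} {a b : ℝ} (hab : a ≤ b)
    (hu : IntervalIntegrable u volume a b)
    (hu2 : IntervalIntegrable (fun t => u t ^ 2) volume a b) :
    (∫ t in a..b, u t) ^ 2 ≤ (b - a) * ∫ t in a..b, u t ^ 2 := by
  -- `x ↦ ∫ (u - x)²` is a nonnegative quadratic, so its discriminant is nonpositive.
  have hquad : ∀ x : ℝ, 0 ≤ (b - a) * (x * x) + (-2 * ∫ t in a..b, u t) * x
      + ∫ t in a..b, u t ^ 2 := fun x => by
    have hexp : ∫ t in a..b, (u t - x) ^ 2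
        = (b - a) * (x * x) + (-2 * ∫ t in a..b, u t) * x + ∫ t in a..b, u t ^ 2 := by
      simp only [sub_sq]
      rw [integral_add (hu2.sub (hu.const_mul _ |>.mul_const _)) intervalIntegrable_const,
        integral_sub hu2 (hu.const_mul _ |>.mul_const _), intervalIntegral.integral_mul_const,
        intervalIntegral.integral_const_mul, intervalIntegral.integral_const, smul_eq_mul]
      ring
    exact hexp ▸ integral_nonneg hab fun t _ => sq_nonneg (u t - x)
  have hdisc := discrim_le_zero hquad
  rw [discrim] at hdisc
  linarith

theorem IntervalIntegrable.of_sq {u : ℝ → ℝ} {a b : ℝ} (hab : a ≤ b)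
    (hu : AEStronglyMeasurable u (volume.restrict (Ioc a b)))
    (hu2 : IntervalIntegrable (fun t => u t ^ 2) volume a b) :
    IntervalIntegrable u volume a b := by
  rw [intervalIntegrable_iff_integrableOn_Ioc_of_le hab] at hu2 ⊢
  exact ((memLp_two_iff_integrable_sq hu).mpr hu2).integrable one_le_two

theorem intervalIntegrable_of_hasDerivAt_of_sq {f f' : ℝ → ℝ} {a b : ℝ} (hab : a ≤ b)
    (hderiv : ∀ x ∈ Icc a b, HasDerivAt f (f' x) x)
    (hf'2 : IntervalIntegrable (fun t => f' t ^ 2) volume a b) :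
    IntervalIntegrable f' volume a b := by
  refine .of_sq hab ((measurable_deriv f).aestronglyMeasurable.congr ?_) hf'2
  filter_upwards [ae_restrict_mem measurableSet_Ioc] with x hx
  exact (hderiv x (Ioc_subset_Icc_self hx)).deriv

theorem sq_sub_le_of_hasDerivAt {f f' : ℝ → ℝ} {a b t : ℝ} (ht : t ∈ Icc a b)
    (hderiv : ∀ x ∈ Icc a b, HasDerivAt f (f' x) x)
    (hf' : IntervalIntegrable f' volume a b)
    (hf'2 : IntervalIntegrable (fun t => f' t ^ 2) volume a b) :
    (f b - f t) ^ 2 ≤ (b - a) * ∫ s in a..b, f' s ^ 2 := by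
  have hab : a ≤ b := ht.1.trans ht.2
  have hsub : uIcc t b ⊆ uIcc a b := by
    rw [uIcc_of_le ht.2, uIcc_of_le hab]; exact Icc_subset_Icc_left ht.1
  have hftc : ∫ s in t..b, f' s = f b - f t :=
    integral_eq_sub_of_hasDerivAt (fun x hx => hderiv x (uIcc_of_le hab ▸ hsub hx))
      (hf'.mono_set hsub)
  have hmono : ∫ s in t..b, f' s ^ 2 ≤ ∫ s in a..b, f' s ^ 2 :=
    integral_mono_interval ht.1 ht.2 le_rfl (.of_forall fun _ => sq_nonneg _) hf'2
  have hnonneg : 0 ≤ ∫ s in t..b, f' s ^ 2 := integral_nonneg ht.2 fun _ _ => sq_nonneg _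
  calc (f b - f t) ^ 2 = (∫ s in t..b, f' s) ^ 2 := by rw [hftc]
    _ ≤ (b - t) * ∫ s in t..b, f' s ^ 2 :=
      sq_intervalIntegral_le ht.2 (hf'.mono_set hsub) (hf'2.mono_set hsub)
    _ ≤ (b - a) * ∫ s in a..b, f' s ^ 2 :=
      mul_le_mul (by linarith [ht.1]) hmono hnonneg (by linarith)

theorem mul_sq_sub_le_of_hasDerivAt {f f' : ℝ → ℝ} {a b : ℝ} (hab : a ≤ b)
    (hderiv : ∀ x ∈ Icc a b, HasDerivAt f (f' x) x)
    (hf'2 : IntervalIntegrable (fun t => f' t ^ 2) volume a b) (c : ℝ) {ε : ℝ} (hε : 0 < ε) :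
    (b - a) * (f b - c) ^ 2 ≤ (1 + ε) * (∫ t in a..b, (f t - c) ^ 2)
      + (1 + ε⁻¹) * (b - a) ^ 2 * ∫ t in a..b, f' t ^ 2 := by
  have hf' := intervalIntegrable_of_hasDerivAt_of_sq hab hderiv hf'2
  have hΔ : IntervalIntegrable (fun t => (f t - c) ^ 2) volume a b :=
    ((HasDerivAt.continuousOn hderiv |>.sub continuousOn_const).pow 2).intervalIntegrable_of_Icc hab
  have hpt : ∀ t ∈ Icc a b, (f b - c) ^ 2 ≤
      (1 + ε) * (f t - c) ^ 2 + (1 + ε⁻¹) * ((b - a) * ∫ s in a..b, f' s ^ 2) := fun t ht =>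
    calc (f b - c) ^ 2 = ((f t - c) + (f b - f t)) ^ 2 := by ring
      _ ≤ (1 + ε) * (f t - c) ^ 2 + (1 + ε⁻¹) * (f b - f t) ^ 2 :=
        add_sq_le_one_add_mul_sq_add hε _ _
      _ ≤ _ := by gcongr; exact sq_sub_le_of_hasDerivAt ht hderiv hf' hf'2
  have hint := integral_mono_on hab intervalIntegrable_const
    ((hΔ.const_mul _).add intervalIntegrable_const) hpt
  rw [integral_add (hΔ.const_mul _) intervalIntegrable_const, intervalIntegral.integral_const_mul,
    intervalIntegral.integral_const, intervalIntegral.integral_const, smul_eq_mul,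
    smul_eq_mul] at hint
  linear_combination hint

theorem eqOn_sq_sub_of_eqOn_Ioc {f g : ℝ → ℝ} {a b c : ℝ} (hab : a ≤ b)
    (hg : EqOn g (fun _ => c) (Ioc a b)) :
    EqOn (fun t => (f t - g t) ^ 2) (fun t => (f t - c) ^ 2) (Ι a b) := fun t ht => by
  rw [uIoc_of_le hab] at ht
  simp only [hg ht]

theorem intervalIntegrable_sq_sub_of_eqOn_Ioc {f g : ℝ → ℝ} {a b c : ℝ} (hab : a ≤ b)
    (hf : ContinuousOn f (Icc a b)) (hg : EqOn g (fun _ => c) (Ioc a b)) :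
    IntervalIntegrable (fun t => (f t - g t) ^ 2) volume a b :=
  (intervalIntegrable_congr (eqOn_sq_sub_of_eqOn_Ioc hab hg)).mpr
    (((hf.sub continuousOn_const).pow 2).intervalIntegrable_of_Icc hab)

theorem mul_sq_sub_le_of_eqOn_Ioc {f f' g : ℝ → ℝ} {a b c : ℝ} (hab : a < b)
    (hderiv : ∀ x ∈ Icc a b, HasDerivAt f (f' x) x)
    (hf'2 : IntervalIntegrable (fun t => f' t ^ 2) volume a b)
    (hg : EqOn g (fun _ => c) (Ioc a b)) {ε : ℝ} (hε : 0 < ε) :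
    (b - a) * (f b - g b) ^ 2 ≤ (1 + ε) * (∫ t in a..b, (f t - g t) ^ 2)
      + (1 + ε⁻¹) * (b - a) ^ 2 * ∫ t in a..b, f' t ^ 2 := by
  rw [integral_congr_ae (.of_forall fun _ ht => eqOn_sq_sub_of_eqOn_Ioc hab.le hg ht),
    hg ⟨hab, le_rfl⟩]
  exact mul_sq_sub_le_of_hasDerivAt hab.le hderiv hf'2 c hε

theorem sum_intervalIntegral_Icc_div {u : ℝ → ℝ} {p : ℕ} (hp : p ≠ 0)
    (hu : ∀ j ∈ Finset.Icc 1 p, IntervalIntegrable u volume ((j - 1 : ℝ) / p) (j / p)) :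
    ∑ j ∈ Finset.Icc 1 p, ∫ t in (j - 1 : ℝ) / p..j / p, u t =
      ∫ t in (0 : ℝ)..1, u t := by
  have hnode (k : ℕ) : (((k + 1 : ℕ) : ℝ) - 1) / p = (k : ℕ) / p := by push_cast; ring
  have hreindex :=
    Finset.sum_Ico_add' (fun j : ℕ => ∫ t in (j - 1 : ℝ) / p..j / p, u t) 0 p 1
  rw [zero_add, Finset.Ico_add_one_right_eq_Icc, ← Finset.range_eq_Ico] at hreindex
  simp only [← hreindex, hnode]
  rw [sum_integral_adjacent_intervals fun k hk =>
    hnode k ▸ hu (k + 1) (Finset.mem_Icc.mpr ⟨by omega, by omega⟩)]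
  simp [hp]

theorem Icc_sub_one_div_subset_Icc_zero_one {p j : ℕ} (hj : j ∈ Finset.Icc 1 p) :
    Icc ((j - 1 : ℝ) / p) (j / p) ⊆ Icc 0 1 := by
  obtain ⟨hj1, hjp⟩ := Finset.mem_Icc.mp hj
  have hp : (0 : ℝ) < p := by exact_mod_cast hj1.trans hjp
  have hj1' : (1 : ℝ) ≤ j := by exact_mod_cast hj1
  exact Icc_subset_Icc (div_nonneg (by linarith) hp.le)
    ((div_le_one hp).mpr (by exact_mod_cast hjp))

/-- For `f` absolutely continuous on `[0,1]` with square-integrable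
derivative `f'` and `g` a step function constant on each `((j-1)/p, j/p]`, for any
`ε > 0` the difference `Δ = f - g` satisfies
`‖Δ‖²_p ≤ (1+ε) ‖Δ‖² + (1+ε⁻¹) ‖f'‖² / p²`. -/
theorem stmt1 (p : ℕ) (hp : 1 ≤ p) (f f' g : ℝ → ℝ) (c : ℕ → ℝ)
    (hderiv : ∀ x ∈ Set.Icc (0:ℝ) 1, HasDerivAt f (f' x) x)
    (hf'2 : IntervalIntegrable (fun t => f' t ^ 2) volume 0 1)
    (hg : ∀ j ∈ Finset.Icc 1 p, ∀ t ∈ Set.Ioc (((j:ℝ) - 1) / p) ((j:ℝ) / p), g t = c j)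
    (ε : ℝ) (hε : 0 < ε) :
    (1 / (p:ℝ)) * ∑ j ∈ Finset.Icc 1 p, (f ((j:ℝ)/p) - g ((j:ℝ)/p)) ^ 2
      ≤ (1 + ε) * (∫ t in (0:ℝ)..1, (f t - g t) ^ 2)
        + (1 + ε⁻¹) * (∫ t in (0:ℝ)..1, f' t ^ 2) / (p:ℝ) ^ 2 := by
  have hlt (j : ℕ) : (j - 1 : ℝ) / p < j / p :=
    div_lt_div_of_pos_right (sub_one_lt _) (by exact_mod_cast hp)
  have hsub (j) (hj : j ∈ Finset.Icc 1 p) := Icc_sub_one_div_subset_Icc_zero_one hj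
  have hf'2_cell (j) (hj : j ∈ Finset.Icc 1 p) :
      IntervalIntegrable (fun t => f' t ^ 2) volume ((j - 1 : ℝ) / p) (j / p) :=
    hf'2.mono_set (by simpa [uIcc_of_le (hlt j).le] using hsub j hj)
  have hΔ_cell (j) (hj : j ∈ Finset.Icc 1 p) :=
    intervalIntegrable_sq_sub_of_eqOn_Ioc (hlt j).le
      ((HasDerivAt.continuousOn hderiv).mono (hsub j hj)) (hg j hj)
  have hcell_le (j) (hj : j ∈ Finset.Icc 1 p) : 1 / (p : ℝ) * (f (j / p) - g (j / p)) ^ 2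
      ≤ (1 + ε) * (∫ t in (j - 1 : ℝ) / p..j / p, (f t - g t) ^ 2)
        + (1 + ε⁻¹) / p ^ 2 * ∫ t in (j - 1 : ℝ) / p..j / p, f' t ^ 2 := by
    have h := mul_sq_sub_le_of_eqOn_Ioc (hlt j) (fun x hx => hderiv x (hsub j hj hx))
      (hf'2_cell j hj) (hg j hj) hε
    rw [show (j : ℝ) / p - (j - 1) / p = 1 / p by ring] at h
    linear_combination h
  calc _ = ∑ j ∈ Finset.Icc 1 p, 1 / (p : ℝ) * (f (j / p) - g (j / p)) ^ 2 :=
        Finset.mul_sum ..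
    _ ≤ _ := Finset.sum_le_sum hcell_le
    _ = _ := by
      rw [Finset.sum_add_distrib, ← Finset.mul_sum, ← Finset.mul_sum,
        sum_intervalIntegral_Icc_div (by omega) hΔ_cell,
        sum_intervalIntegral_Icc_div (by omega) hf'2_cell]
      ring
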